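/- arXiv:2310.18128 — 3 statements merged into one kernel-verified Lean document; each statement's English description precedes it below -/
import Mathlib

section
/- Let G be a finite directed graph with nonnegative real arc weights and total arc weight w(G), and let W, W' be two reals with W > w(G) and W' > w(G). For any vertices s and t such that t is reachable from s in G^{+W} (equivalently, in G^{+W'}), it holds that d_{G^{+W'}}(s,t) = d_{G^{+W}}(s,t) + (W' − W)·⌊ d_{G^{+W}}(s,t) / W ⌋. -/
/-!
In `G^{+W}` a path `π` costs `a + W * n`, where `a` is the weight of its forward arcs and `n`
the number of its reverse arcs. A path is simple, so it uses each arc of `G` at most once and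
`0 ≤ a ≤ w(G) < W`. Hence costs in `G^{+W}` compare lexicographically in `(n, a)`, which does not
depend on `W`: a path that is cheapest for `W` is cheapest for `W'`, and its `n` is
`⌊d_{G^{+W}}(s,t) / W⌋`.
-/

/-- `π` is a path in the digraph with adjacency `Adj` from `s` to `t`:
a nonempty list of pairwise distinct vertices, consecutive ones joined by arcs. -/
def DPath {V : Type*} (Adj : V → V → Prop) (π : List V) (s t : V) : Prop :=
  π ≠ [] ∧ π.head? = some s ∧ π.getLast? = some t ∧ π.Chain' Adj ∧ π.Nodup

/-- Cost of a path: the sum of the weights of its arcs. -/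
noncomputable def dcost {V : Type*} (w : V → V → ℝ) (π : List V) : ℝ :=
  ((π.zip π.tail).map fun p => w p.1 p.2).sum

/-- Minimum cost of a path from `s` to `t`. -/
noncomputable def minCost {V : Type*} (Adj : V → V → Prop) (w : V → V → ℝ)
    (s t : V) : ℝ :=
  sInf {x | ∃ π, DPath Adj π s t ∧ x = dcost w π}

/-- The weights of `G^{+W}`: original arcs keep their weight,
the added reverse arcs have weight `W`. -/
noncomputable def wplus {V : Type*} (E : V → V → Prop) [DecidableRel E]
    (w : V → V → ℝ) (W : ℝ) : V → V → ℝ :=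
  fun u v => if E u v then w u v else W

lemma List.Nodup.zip_tail {α : Type*} {l : List α} (h : l.Nodup) : (l.zip l.tail).Nodup :=
  List.Nodup.of_map Prod.snd <| by rw [List.map_snd_zip (by simp)]; exact h.tail

lemma add_mul_natCast_le_add_mul_natCast_iff {W a a' : ℝ} {n n' : ℕ}
    (ha : 0 ≤ a) (ha' : 0 ≤ a') (haW : a < W) (ha'W : a' < W) :
    a' + W * n' ≤ a + W * n ↔ n' < n ∨ n' = n ∧ a' ≤ a := by
  constructor
  · intro h
    rcases lt_trichotomy n' n with hlt | rfl | hgt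
    · exact Or.inl hlt
    · exact Or.inr ⟨rfl, by linarith⟩
    · have : (n : ℝ) + 1 ≤ n' := by exact_mod_cast hgt
      nlinarith
  · rintro (hlt | ⟨rfl, hle⟩)
    · have : (n' : ℝ) + 1 ≤ n := by exact_mod_cast hlt
      nlinarith
    · linarith

lemma Int.floor_add_mul_natCast_div {W a : ℝ} (n : ℕ) (ha : 0 ≤ a) (haW : a < W) :
    ⌊(a + W * n) / W⌋ = n := by
  have hW : 0 < W := ha.trans_lt haW
  rw [add_div, mul_div_cancel_left₀ _ hW.ne', Int.floor_add_natCast,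
    Int.floor_eq_zero_iff.2 ⟨div_nonneg ha hW.le, (div_lt_one hW).2 haW⟩, zero_add]

section ShortestPath

variable {V : Type*} {Adj : V → V → Prop} {s t : V}

lemma DPath.nodup {π : List V} (h : DPath Adj π s t) : π.Nodup := h.2.2.2.2

lemma finite_setOf_dPath [Finite V] (Adj : V → V → Prop) (s t : V) : {π | DPath Adj π s t}.Finite := by
  have := Fintype.ofFinite V
  refine (List.finite_length_le V (Fintype.card V)).subset fun π hπ => ?_
  exact hπ.nodup.length_le_card

lemma exists_dPath_forall_dcost_le [Finite V] (w : V → V → ℝ) (h : ∃ π, DPath Adj π s t) :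
    ∃ π, DPath Adj π s t ∧ ∀ π', DPath Adj π' s t → dcost w π ≤ dcost w π' :=
  Set.exists_min_image _ (dcost w) (finite_setOf_dPath Adj s t) h

lemma minCost_eq_dcost {w : V → V → ℝ} {π : List V} (hπ : DPath Adj π s t)
    (hmin : ∀ π', DPath Adj π' s t → dcost w π ≤ dcost w π') :
    minCost Adj w s t = dcost w π :=
  IsLeast.csInf_eq ⟨⟨π, hπ, rfl⟩, by rintro _ ⟨π', hπ', rfl⟩; exact hmin π' hπ'⟩

end ShortestPath

section ReverseArcs

variable {V : Type*} (E : V → V → Prop) [DecidableRel E] (w : V → V → ℝ)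

noncomputable def forwardCost (π : List V) : ℝ :=
  ((π.zip π.tail).map fun p => if E p.1 p.2 then w p.1 p.2 else 0).sum

def reverseCount (π : List V) : ℕ :=
  (π.zip π.tail).countP fun p => ¬ E p.1 p.2

lemma dcost_wplus (W : ℝ) (π : List V) :
    dcost (wplus E w W) π = forwardCost E w π + W * reverseCount E π := by
  unfold dcost wplus forwardCost reverseCount
  induction π.zip π.tail with
  | nil => simp
  | cons p l ih =>
    simp only [List.map_cons, List.sum_cons, List.countP_cons, ih]
    by_cases h : E p.1 p.2 <;> simp [h] <;> ring

variable {E w}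

lemma forwardCost_nonneg (hw : ∀ u v, E u v → 0 ≤ w u v) (π : List V) :
    0 ≤ forwardCost E w π :=
  List.sum_nonneg <| by
    simp only [List.mem_map]
    rintro _ ⟨p, -, rfl⟩
    split_ifs with h
    exacts [hw _ _ h, le_rfl]

lemma forwardCost_le_sum [Fintype V] (hw : ∀ u v, E u v → 0 ≤ w u v) {π : List V}
    (hπ : π.Nodup) :
    forwardCost E w π ≤ ∑ u : V, ∑ v : V, if E u v then w u v else 0 := by
  classical
  rw [forwardCost, ← List.sum_toFinset _ hπ.zip_tail, ← Fintype.sum_prod_type']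
  refine Finset.sum_le_sum_of_subset_of_nonneg (Finset.subset_univ _) fun p _ _ => ?_
  split_ifs with h
  exacts [hw _ _ h, le_rfl]

lemma dcost_wplus_le_dcost_wplus_iff [Fintype V] (hw : ∀ u v, E u v → 0 ≤ w u v) {W : ℝ}
    (hW : (∑ u : V, ∑ v : V, if E u v then w u v else 0) < W) {π π' : List V}
    (hπ : π.Nodup) (hπ' : π'.Nodup) :
    dcost (wplus E w W) π' ≤ dcost (wplus E w W) π ↔
      reverseCount E π' < reverseCount E π ∨
        reverseCount E π' = reverseCount E π ∧ forwardCost E w π' ≤ forwardCost E w π := by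
  rw [dcost_wplus, dcost_wplus]
  exact add_mul_natCast_le_add_mul_natCast_iff (forwardCost_nonneg hw π)
    (forwardCost_nonneg hw π') ((forwardCost_le_sum hw hπ).trans_lt hW)
    ((forwardCost_le_sum hw hπ').trans_lt hW)

end ReverseArcs

/-- Let `G` be a finite digraph with nonnegative arc weights
and total arc weight `w(G)`, and let `W, W' > w(G)`. The graphs `G^{+W}` and
`G^{+W'}` share the arc set `fun u v => E u v ∨ E v u`. For any vertices `s`
and `t` such that `t` is reachable from `s` in `G^{+W}`, we have
`d_{G^{+W'}}(s,t) = d_{G^{+W}}(s,t) + (W' − W)·⌊d_{G^{+W}}(s,t)/W⌋`. -/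
theorem stmt2 {V : Type*} [Fintype V] (E : V → V → Prop) [DecidableRel E]
    (w : V → V → ℝ) (hw : ∀ u v, E u v → 0 ≤ w u v)
    (W W' : ℝ)
    (hW : (∑ u : V, ∑ v : V, if E u v then w u v else 0) < W)
    (hW' : (∑ u : V, ∑ v : V, if E u v then w u v else 0) < W')
    (s t : V) (hconn : ∃ π, DPath (fun u v => E u v ∨ E v u) π s t) :
    minCost (fun u v => E u v ∨ E v u) (wplus E w W') s t
      = minCost (fun u v => E u v ∨ E v u) (wplus E w W) s t
        + (W' - W) *
          (⌊minCost (fun u v => E u v ∨ E v u) (wplus E w W) s t / W⌋ : ℝ) := by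
  obtain ⟨π, hπ, hmin⟩ := exists_dPath_forall_dcost_le (wplus E w W) hconn
  have hmin' : ∀ π', DPath (fun u v => E u v ∨ E v u) π' s t →
      dcost (wplus E w W') π ≤ dcost (wplus E w W') π' := fun π' hπ' => by
    rw [dcost_wplus_le_dcost_wplus_iff hw hW' hπ'.nodup hπ.nodup,
      ← dcost_wplus_le_dcost_wplus_iff hw hW hπ'.nodup hπ.nodup]
    exact hmin π' hπ'
  rw [minCost_eq_dcost hπ hmin', minCost_eq_dcost hπ hmin, dcost_wplus, dcost_wplus,
    Int.floor_add_mul_natCast_div _ (forwardCost_nonneg hw π)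
      ((forwardCost_le_sum hw hπ.nodup).trans_lt hW)]
  push_cast
  ring
end

section
/- In the DTW lower-bound construction, let B₁ and B₂ be two blocks that are horizontally or vertically adjacent. Then for every u = (i,j) ∈ B₁ and v = (x,y) ∈ B₂ with i ≤ x and j ≤ y, the minimum cost of an xy-monotone path from u to v in the induced vertex-weighted grid equals 4U⁵ + 10U⁴. -/
/-- A single step of an xy-monotone path in the grid:
coordinates change by (1,0), (0,1), or (1,1). -/
def MStep (u v : ℕ × ℕ) : Prop :=
  (v.1 = u.1 + 1 ∧ v.2 = u.2) ∨ (v.1 = u.1 ∧ v.2 = u.2 + 1) ∨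
    (v.1 = u.1 + 1 ∧ v.2 = u.2 + 1)

/-- `π` is an xy-monotone path from `s` to `t`. -/
def MPath (π : List (ℕ × ℕ)) (s t : ℕ × ℕ) : Prop :=
  π ≠ [] ∧ π.head? = some s ∧ π.getLast? = some t ∧ π.Chain' MStep

/-- Cost of a path in a vertex-weighted grid: sum of the weights of all its
vertices. -/
noncomputable def vcost (w : ℕ × ℕ → ℝ) (π : List (ℕ × ℕ)) : ℝ :=
  (π.map w).sum

/-- The point `⋆ = −U⁵`. -/
noncomputable def starPt (U : ℕ) : ℝ := -(U : ℝ) ^ 5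

/-- The `o`-th point (offsets `0,…,19`) of the 20-point curve `α_i`:
eight copies of `⋆`, then `α_i¹,…,α_i⁴`, then eight copies of `⋆`. -/
noncomputable def alphaVal (U : ℕ) (r d : ℕ → ℕ) (i o : ℕ) : ℝ :=
  if o = 8 then (U : ℝ) ^ 4 + 2 * (r i) * (U : ℝ) ^ 3 + (d i) / 4
  else if o = 9 then 2 * (U : ℝ) ^ 4 + 2 * (r i) * (U : ℝ) ^ 3 - (d i) / 4
  else if o = 10 then 3 * (U : ℝ) ^ 4 - 2 * (r i) * (U : ℝ) ^ 3 + (d i) / 4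
  else if o = 11 then 4 * (U : ℝ) ^ 4 - 2 * (r i) * (U : ℝ) ^ 3 - (d i) / 4
  else starPt U

/-- The `o`-th point (offsets `0,…,19`) of the 20-point curve `β_j`:
eight copies of `⋆`, then `β_j¹,…,β_j⁴`, then eight copies of `⋆`. -/
noncomputable def betaVal (U : ℕ) (c b : ℕ → ℕ) (j o : ℕ) : ℝ :=
  if o = 8 then (U : ℝ) ^ 4 + 2 * (c j) * (U : ℝ) ^ 3 - U
  else if o = 9 then 2 * (U : ℝ) ^ 4 + 2 * (c j) * (U : ℝ) ^ 3 + U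
  else if o = 10 then 3 * (U : ℝ) ^ 4 - 2 * (c j) * (U : ℝ) ^ 3 + (-1 : ℝ) ^ (b j) * U
  else if o = 11 then 4 * (U : ℝ) ^ 4 - 2 * (c j) * (U : ℝ) ^ 3 - (-1 : ℝ) ^ (b j) * U
  else starPt U

/-- The curve `P` (1-indexed, of length `20·n_r`): concatenation of
`α_0, …, α_{n_r−1}`. -/
noncomputable def Pcur (U : ℕ) (r d : ℕ → ℕ) (k : ℕ) : ℝ :=
  alphaVal U r d ((k - 1) / 20) ((k - 1) % 20)

/-- The curve `Q` (1-indexed, of length `20·n_c`): concatenation of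
`β_0, …, β_{n_c−1}`. -/
noncomputable def Qcur (U : ℕ) (c b : ℕ → ℕ) (k : ℕ) : ℝ :=
  betaVal U c b ((k - 1) / 20) ((k - 1) % 20)


/-- The set of orange vertices of the grid: both curve points equal `⋆`. -/
noncomputable def orangeSet (nr nc U : ℕ) (r d c b : ℕ → ℕ) : Set (ℕ × ℕ) :=
  {v | 1 ≤ v.1 ∧ v.1 ≤ 20 * nr ∧ 1 ≤ v.2 ∧ v.2 ≤ 20 * nc ∧
    Pcur U r d v.1 = starPt U ∧ Qcur U c b v.2 = starPt U}

/-- Two grid vertices are adjacent if they differ by at most 1 in each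
coordinate. -/
def kingAdj (u v : ℕ × ℕ) : Prop :=
  u.1 ≤ v.1 + 1 ∧ v.1 ≤ u.1 + 1 ∧ u.2 ≤ v.2 + 1 ∧ v.2 ≤ u.2 + 1

/-- `B` is a block: a connected component of the set `O` of orange vertices. -/
def IsBlock (O : Set (ℕ × ℕ)) (B : Set (ℕ × ℕ)) : Prop :=
  ∃ v ∈ O, B = {u | u ∈ O ∧
    Relation.ReflTransGen (fun a b => a ∈ O ∧ b ∈ O ∧ kingAdj a b) v u}

/-- Blocks `B₁`, `B₂` are horizontally adjacent: some grid row intersects them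
consecutively, with no vertex of a third block between them on that row. -/
def HorizAdj (O B₁ B₂ : Set (ℕ × ℕ)) : Prop :=
  ∃ x y₁ y₂ : ℕ, y₁ < y₂ ∧
    (((x, y₁) ∈ B₁ ∧ (x, y₂) ∈ B₂) ∨ ((x, y₁) ∈ B₂ ∧ (x, y₂) ∈ B₁)) ∧
    ∀ y', y₁ < y' → y' < y₂ →
      ∀ B₃, IsBlock O B₃ → B₃ ≠ B₁ → B₃ ≠ B₂ → (x, y') ∉ B₃

/-- Blocks `B₁`, `B₂` are vertically adjacent: some grid column intersects them
consecutively, with no vertex of a third block between them on that column. -/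
def VertAdj (O B₁ B₂ : Set (ℕ × ℕ)) : Prop :=
  ∃ y x₁ x₂ : ℕ, x₁ < x₂ ∧
    (((x₁, y) ∈ B₁ ∧ (x₂, y) ∈ B₂) ∨ ((x₁, y) ∈ B₂ ∧ (x₂, y) ∈ B₁)) ∧
    ∀ x', x₁ < x' → x' < x₂ →
      ∀ B₃, IsBlock O B₃ → B₃ ≠ B₁ → B₃ ≠ B₂ → (x', y) ∉ B₃

/-!
A monotone path from `(i, j)` to `(x, y)` stays in the rectangle spanned by these corners and
meets every column of it. As `U` is large, every gadget point other than `⋆` lies above `⋆`, so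
the blocks are the products of the maximal `⋆`-runs of `P` and of `Q`, and two horizontally
adjacent blocks share their run of rows and occupy consecutive runs of columns: on the rectangle
the weight depends on the column alone, vanishes on the `⋆`-columns, and equals `U⁵ + β_t^k` on
the four columns of the gadget `β_t` separating the two runs. Walking down the first column and
then along the last row pays exactly these four weights, whose sum is `4U⁵ + 10U⁴` because the
`±2cU³` and `±U` terms of the gadget cancel. Vertical adjacency is the same statement after
transposing the grid.
-/

open Finset

lemma MStep.le {u v : ℕ × ℕ} (h : MStep u v) : u ≤ v := by
  rcases h with ⟨h1, h2⟩ | ⟨h1, h2⟩ | ⟨h1, h2⟩ <;> exact Prod.mk_le_mk.2 ⟨by omega, by omega⟩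

lemma MStep.snd_eq_or {u v : ℕ × ℕ} (h : MStep u v) : v.2 = u.2 ∨ v.2 = u.2 + 1 := by
  rcases h with ⟨_, h⟩ | ⟨_, h⟩ | ⟨_, h⟩ <;> omega

lemma MStep.swap {u v : ℕ × ℕ} (h : MStep u v) : MStep u.swap v.swap := by
  unfold MStep at *
  simp only [Prod.fst_swap, Prod.snd_swap]
  tauto

lemma MPath.mem_Icc {π : List (ℕ × ℕ)} {s t v : ℕ × ℕ} (h : MPath π s t) (hv : v ∈ π) :
    v ∈ Set.Icc s t := by
  obtain ⟨-, hs, ht, hc⟩ := h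
  have hp : π.Pairwise (· ≤ ·) :=
    List.isChain_iff_pairwise.1 (List.IsChain.imp (fun _ _ h => MStep.le h) hc)
  obtain ⟨l, rfl⟩ := List.head?_eq_some_iff.1 hs
  obtain ⟨l', hl'⟩ := List.getLast?_eq_some_iff.1 ht
  constructor
  · rcases List.mem_cons.1 hv with rfl | hv
    · exact le_rfl
    · exact List.rel_of_pairwise_cons hp hv
  · rw [hl'] at hp hv
    rcases List.mem_append.1 hv with hv | hv
    · exact (List.pairwise_append.1 hp).2.2 v hv t (List.mem_singleton_self t)
    · rw [List.mem_singleton.1 hv]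

lemma MPath.cons {π : List (ℕ × ℕ)} {s s' t : ℕ × ℕ} (h : MPath π s' t) (hs : MStep s s') :
    MPath (s :: π) s t := by
  obtain ⟨-, hs', ht, hc⟩ := h
  obtain ⟨l, rfl⟩ := List.head?_eq_some_iff.1 hs'
  exact ⟨List.cons_ne_nil _ _, rfl, by simpa using ht, List.IsChain.cons_cons hs hc⟩

lemma MPath.map_swap {π : List (ℕ × ℕ)} {s t : ℕ × ℕ} (h : MPath π s t) :
    MPath (π.map Prod.swap) s.swap t.swap := by
  obtain ⟨hne, hs, ht, hc⟩ := h
  exact ⟨by simpa using hne, by simp [hs], by simp [ht],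
    (List.isChain_map _).2 (hc.imp fun _ _ h => h.swap)⟩

def pathCosts (W : ℕ × ℕ → ℝ) (s t : ℕ × ℕ) : Set ℝ :=
  {c | ∃ π : List (ℕ × ℕ), MPath π s t ∧ c = vcost W π}

lemma pathCosts_congr {W W' : ℕ × ℕ → ℝ} {s t : ℕ × ℕ} (h : ∀ v ∈ Set.Icc s t, W v = W' v) :
    pathCosts W s t = pathCosts W' s t := by
  ext c
  refine exists_congr fun π => and_congr_right fun hπ => ?_
  rw [vcost, vcost, List.map_congr_left fun v hv => h v (hπ.mem_Icc hv)]

lemma pathCosts_swap {W W' : ℕ × ℕ → ℝ} (hW : ∀ v, W' v = W v.swap) (s t : ℕ × ℕ) :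
    pathCosts W s t = pathCosts W' s.swap t.swap := by
  have hcost : ∀ π, vcost W' (π.map Prod.swap) = vcost W π := fun π => by
    simp [vcost, hW, Function.comp_def]
  ext c
  constructor
  · rintro ⟨π, hπ, rfl⟩
    exact ⟨π.map Prod.swap, hπ.map_swap, (hcost π).symm⟩
  · rintro ⟨π, hπ, rfl⟩
    refine ⟨π.map Prod.swap, by simpa using hπ.map_swap, ?_⟩
    rw [← hcost, List.map_map, Prod.swap_swap_eq, List.map_id]

section ColumnWeights

variable (f : ℕ → ℝ)

lemma sum_Icc_le_vcost_snd (hf : ∀ b, 0 ≤ f b) {π : List (ℕ × ℕ)} {s t : ℕ × ℕ}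
    (h : MPath π s t) : ∑ b ∈ Icc s.2 t.2, f b ≤ vcost (fun v => f v.2) π := by
  induction π generalizing s with
  | nil => exact absurd rfl h.1
  | cons a l ih =>
    obtain ⟨-, hs, ht, hc⟩ := h
    obtain rfl : a = s := by simpa using hs
    cases l with
    | nil =>
      obtain rfl : a = t := by simpa using ht
      simp [vcost]
    | cons a' l' =>
      have htail : MPath (a' :: l') a' t :=
        ⟨List.cons_ne_nil _ _, rfl, by simpa using ht, (List.isChain_cons_cons.1 hc).2⟩
      have ha't : a'.2 ≤ t.2 := (htail.mem_Icc List.mem_cons_self).2.2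
      have hcost : vcost (fun v => f v.2) (a :: a' :: l')
          = f a.2 + vcost (fun v => f v.2) (a' :: l') := by
        simp [vcost]
      have hrest := ih htail
      rw [hcost]
      rcases (List.isChain_cons_cons.1 hc).1.snd_eq_or with hcol | hcol
      · rw [hcol] at hrest
        linarith [hf a.2]
      · rw [Icc_eq_cons_Ioc (by omega), sum_cons, ← Icc_add_one_left_eq_Ioc, ← hcol]
        linarith

lemma exists_mpath_row (x : ℕ) {j y : ℕ} (hjy : j ≤ y) :
    ∃ π, MPath π (x, j) (x, y) ∧ vcost (fun v => f v.2) π = ∑ b ∈ Icc j y, f b := by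
  induction hjy using Nat.decreasingInduction with
  | self =>
    exact ⟨[(x, y)], ⟨List.cons_ne_nil _ _, rfl, rfl, List.isChain_singleton _⟩, by simp [vcost]⟩
  | of_succ j hj ih =>
    obtain ⟨π, hπ, hcost⟩ := ih
    refine ⟨(x, j) :: π, hπ.cons (Or.inr (Or.inl ⟨rfl, rfl⟩)), ?_⟩
    rw [Icc_eq_cons_Ioc hj.le, sum_cons, ← Icc_add_one_left_eq_Ioc, ← hcost]
    simp [vcost]

lemma exists_mpath_col_row {i j x y : ℕ} (hj : f j = 0) (hix : i ≤ x) (hjy : j ≤ y) :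
    ∃ π, MPath π (i, j) (x, y) ∧ vcost (fun v => f v.2) π = ∑ b ∈ Icc j y, f b := by
  induction hix using Nat.decreasingInduction with
  | self => exact exists_mpath_row f x hjy
  | of_succ i hi ih =>
    obtain ⟨π, hπ, hcost⟩ := ih
    refine ⟨(i, j) :: π, hπ.cons (Or.inl ⟨rfl, rfl⟩), ?_⟩
    rw [← hcost]
    simp [vcost, hj]

theorem sInf_pathCosts_snd (hf : ∀ b, 0 ≤ f b) {i j x y : ℕ} (hj : f j = 0) (hix : i ≤ x)
    (hjy : j ≤ y) :
    sInf (pathCosts (fun v => f v.2) (i, j) (x, y)) = ∑ b ∈ Icc j y, f b := by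
  obtain ⟨π, hπ, hcost⟩ := exists_mpath_col_row f hj hix hjy
  have hlb : ∀ c ∈ pathCosts (fun v => f v.2) (i, j) (x, y), ∑ b ∈ Icc j y, f b ≤ c := by
    rintro c ⟨π', hπ', rfl⟩
    exact sum_Icc_le_vcost_snd f hf hπ'
  exact le_antisymm (csInf_le ⟨_, hlb⟩ ⟨π, hπ, hcost.symm⟩) (le_csInf ⟨_, π, hπ, rfl⟩ hlb)

end ColumnWeights

/-- The indices `k ∈ [1, 20 n]` at which a concatenation of `n` gadgets equals `⋆`. -/
def starIdx (n : ℕ) : Set ℕ :=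
  {k | 1 ≤ k ∧ k ≤ 20 * n ∧ ((k - 1) % 20 < 8 ∨ 11 < (k - 1) % 20)}

/-- The maximal runs of `starIdx n` are indexed by `runIdx`: run `t` consists of the trailing
`⋆`'s of gadget `t - 1` followed by the leading `⋆`'s of gadget `t`. -/
def runIdx (k : ℕ) : ℕ := (k + 7) / 20

lemma runIdx_mono {k l : ℕ} (h : k ≤ l) : runIdx k ≤ runIdx l :=
  Nat.div_le_div_right (by omega)

lemma runIdx_le {n k : ℕ} (hk : k ∈ starIdx n) : runIdx k ≤ n := by
  simp only [starIdx, Set.mem_ofPred_eq, runIdx] at *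
  omega

lemma runIdx_eq_of_le_add_one {n k l : ℕ} (hk : k ∈ starIdx n) (hl : l ∈ starIdx n)
    (hkl : k ≤ l + 1) (hlk : l ≤ k + 1) : runIdx k = runIdx l := by
  simp only [starIdx, Set.mem_ofPred_eq, runIdx] at *
  omega

lemma mem_starIdx_of_runIdx_eq {n k l m : ℕ} (hk : k ∈ starIdx n) (hl : l ∈ starIdx n)
    (h : runIdx k = runIdx l) (hkm : k ≤ m) (hml : m ≤ l) :
    m ∈ starIdx n ∧ runIdx m = runIdx k := by
  simp only [starIdx, Set.mem_ofPred_eq, runIdx] at *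
  omega

lemma mem_starIdx_of_runIdx_ge {n y t : ℕ} (hy : y ∈ starIdx n) (h : t + 2 ≤ runIdx y) :
    20 * t + 13 ∈ starIdx n ∧ runIdx (20 * t + 13) = t + 1 := by
  simp only [starIdx, Set.mem_ofPred_eq, runIdx] at *
  omega

lemma sum_Icc_eq_sum_gap {n j y : ℕ} (g : ℕ → ℝ) (hg : ∀ k ∈ starIdx n, g k = 0)
    (hj : j ∈ starIdx n) (hy : y ∈ starIdx n) (h : runIdx y = runIdx j + 1) :
    ∑ k ∈ Icc j y, g k = ∑ o ∈ range 4, g (20 * runIdx j + 9 + o) := by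
  simp only [starIdx, Set.mem_ofPred_eq, runIdx] at hj hy h
  rw [range_eq_Ico, sum_Ico_add g, zero_add]
  refine (sum_subset (fun k hk => ?_) fun k hk hk' => hg k ?_).symm
  · simp only [mem_Ico, mem_Icc, runIdx] at hk ⊢
    omega
  · simp only [mem_Ico, mem_Icc, starIdx, Set.mem_ofPred_eq, runIdx] at hk hk' ⊢
    omega

theorem sInf_pathCosts_of_runIdx {p q : ℕ → ℝ} {s : ℝ} {m n i j x y : ℕ}
    (hp : ∀ k ∈ starIdx m, p k = s) (hq : ∀ k ∈ starIdx n, q k = s)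
    (hi : i ∈ starIdx m) (hx : x ∈ starIdx m) (hj : j ∈ starIdx n) (hy : y ∈ starIdx n)
    (hix : i ≤ x) (hrow : runIdx i = runIdx x) (hcol : runIdx y = runIdx j + 1) :
    sInf (pathCosts (fun v => |p v.1 - q v.2|) (i, j) (x, y))
      = ∑ o ∈ range 4, |s - q (20 * runIdx j + 9 + o)| := by
  have hjy : j ≤ y := by
    by_contra! h
    linarith [runIdx_mono h.le]
  have hq0 : ∀ k ∈ starIdx n, |s - q k| = 0 := fun k hk => by rw [hq k hk, sub_self, abs_zero]
  have hrows : ∀ v ∈ Set.Icc (i, j) (x, y), |p v.1 - q v.2| = |s - q v.2| := fun v hv => by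
    rw [hp v.1 (mem_starIdx_of_runIdx_eq hi hx hrow hv.1.1 hv.2.1).1]
  rw [pathCosts_congr hrows,
    sInf_pathCosts_snd (fun b => |s - q b|) (fun _ => abs_nonneg _) (hq0 j hj) hix hjy]
  exact sum_Icc_eq_sum_gap _ hq0 hj hy hcol

section Gadgets

variable {U : ℕ}

lemma starPt_lt_alphaVal {r d : ℕ → ℕ} {t o : ℕ} (hU : 1 ≤ U) (hr : 2 * r t ≤ U) (hd : d t ≤ U)
    (h8 : 8 ≤ o) (h11 : o ≤ 11) : starPt U < alphaVal U r d t o := by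
  have hU' : (1 : ℝ) ≤ U := by exact_mod_cast hU
  have hr' : 2 * (r t : ℝ) * U ^ 3 ≤ U ^ 4 := by
    have : 2 * (r t : ℝ) ≤ U := by exact_mod_cast hr
    nlinarith [pow_pos (by linarith : (0 : ℝ) < U) 3]
  have hd' : (d t : ℝ) ≤ U ^ 4 := by
    have : (d t : ℝ) ≤ U := by exact_mod_cast hd
    nlinarith [pow_le_pow_right₀ hU' (by norm_num : 1 ≤ 4)]
  have h5 : (0 : ℝ) < U ^ 5 := by positivity
  have hr0 : (0 : ℝ) ≤ r t * U ^ 3 := by positivity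
  unfold starPt alphaVal
  interval_cases o <;> simp <;> linarith [(d t).cast_nonneg (α := ℝ)]

lemma starPt_lt_betaVal {c b : ℕ → ℕ} {t o : ℕ} (hU : 1 ≤ U) (hc : 2 * c t ≤ U)
    (h8 : 8 ≤ o) (h11 : o ≤ 11) : starPt U < betaVal U c b t o := by
  have hU' : (1 : ℝ) ≤ U := by exact_mod_cast hU
  have hc' : 2 * (c t : ℝ) * U ^ 3 ≤ U ^ 4 := by
    have : 2 * (c t : ℝ) ≤ U := by exact_mod_cast hc
    nlinarith [pow_pos (by linarith : (0 : ℝ) < U) 3]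
  have hU4 : (U : ℝ) ≤ U ^ 4 := by
    simpa using pow_le_pow_right₀ hU' (by norm_num : 1 ≤ 4)
  have h5 : (0 : ℝ) < U ^ 5 := by positivity
  have hc0 : (0 : ℝ) ≤ c t * U ^ 3 := by positivity
  unfold starPt betaVal
  rcases neg_one_pow_eq_or ℝ (b t) with hs | hs <;>
    interval_cases o <;> simp [hs] <;> linarith

lemma alphaVal_eq_starPt {r d : ℕ → ℕ} {t o : ℕ} (h : o < 8 ∨ 11 < o) :
    alphaVal U r d t o = starPt U := by
  unfold alphaVal
  rw [if_neg (by omega), if_neg (by omega), if_neg (by omega), if_neg (by omega)]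

lemma betaVal_eq_starPt {c b : ℕ → ℕ} {t o : ℕ} (h : o < 8 ∨ 11 < o) :
    betaVal U c b t o = starPt U := by
  unfold betaVal
  rw [if_neg (by omega), if_neg (by omega), if_neg (by omega), if_neg (by omega)]

lemma sum_abs_starPt_sub {g : ℕ → ℝ} (hg : ∀ o < 4, starPt U < g o)
    (hsum : ∑ o ∈ range 4, g o = 10 * (U : ℝ) ^ 4) :
    ∑ o ∈ range 4, |starPt U - g o| = 4 * (U : ℝ) ^ 5 + 10 * (U : ℝ) ^ 4 := by
  rw [sum_congr rfl fun o ho =>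
    (abs_sub_comm _ _).trans (abs_of_pos (sub_pos.2 (hg o (mem_range.1 ho)))),
    sum_sub_distrib, hsum]
  simp [starPt]
  ring

lemma Pcur_eq_starPt_iff {r d : ℕ → ℕ} {k : ℕ} (hU : 1 ≤ U) (hr : 2 * r ((k - 1) / 20) ≤ U)
    (hd : d ((k - 1) / 20) ≤ U) :
    Pcur U r d k = starPt U ↔ (k - 1) % 20 < 8 ∨ 11 < (k - 1) % 20 := by
  refine ⟨fun h => ?_, alphaVal_eq_starPt⟩
  by_contra hk
  exact (starPt_lt_alphaVal hU hr hd (by omega) (by omega)).ne' h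

lemma Qcur_eq_starPt_iff {c b : ℕ → ℕ} {k : ℕ} (hU : 1 ≤ U) (hc : 2 * c ((k - 1) / 20) ≤ U) :
    Qcur U c b k = starPt U ↔ (k - 1) % 20 < 8 ∨ 11 < (k - 1) % 20 := by
  refine ⟨fun h => ?_, betaVal_eq_starPt⟩
  by_contra hk
  exact (starPt_lt_betaVal hU hc (by omega) (by omega)).ne' h

theorem orangeSet_eq_prod {nr nc : ℕ} {r d c b : ℕ → ℕ} (hU : 1 ≤ U)
    (hrd : ∀ t < nr, 2 * r t ≤ U ∧ d t ≤ U) (hc : ∀ t < nc, 2 * c t ≤ U) :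
    orangeSet nr nc U r d c b = starIdx nr ×ˢ starIdx nc := by
  ext ⟨k, l⟩
  simp only [orangeSet, starIdx, Set.mem_prod, Set.mem_ofPred_eq]
  constructor
  · rintro ⟨hk1, hk2, hl1, hl2, hP, hQ⟩
    obtain ⟨hr, hd⟩ := hrd ((k - 1) / 20) (by omega)
    exact ⟨⟨hk1, hk2, (Pcur_eq_starPt_iff hU hr hd).1 hP⟩,
      ⟨hl1, hl2, (Qcur_eq_starPt_iff hU (hc ((l - 1) / 20) (by omega))).1 hQ⟩⟩
  · rintro ⟨⟨hk1, hk2, hP⟩, ⟨hl1, hl2, hQ⟩⟩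
    exact ⟨hk1, hk2, hl1, hl2, alphaVal_eq_starPt hP, betaVal_eq_starPt hQ⟩

lemma sum_abs_starPt_sub_Pcur {r d : ℕ → ℕ} {t : ℕ} (hU : 1 ≤ U) (hr : 2 * r t ≤ U)
    (hd : d t ≤ U) :
    ∑ o ∈ range 4, |starPt U - Pcur U r d (20 * t + 9 + o)|
      = 4 * (U : ℝ) ^ 5 + 10 * (U : ℝ) ^ 4 := by
  have hgap : ∀ o < 4, Pcur U r d (20 * t + 9 + o) = alphaVal U r d t (8 + o) := fun o ho => by
    unfold Pcur
    congr 1 <;> omega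
  refine sum_abs_starPt_sub (fun o ho => hgap o ho ▸ starPt_lt_alphaVal hU hr hd (by omega)
    (by omega)) ?_
  rw [sum_congr rfl fun o ho => hgap o (mem_range.1 ho)]
  simp [sum_range_succ, alphaVal]
  ring

lemma sum_abs_starPt_sub_Qcur {c b : ℕ → ℕ} {t : ℕ} (hU : 1 ≤ U) (hc : 2 * c t ≤ U) :
    ∑ o ∈ range 4, |starPt U - Qcur U c b (20 * t + 9 + o)|
      = 4 * (U : ℝ) ^ 5 + 10 * (U : ℝ) ^ 4 := by
  have hgap : ∀ o < 4, Qcur U c b (20 * t + 9 + o) = betaVal U c b t (8 + o) := fun o ho => by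
    unfold Qcur
    congr 1 <;> omega
  refine sum_abs_starPt_sub (fun o ho => hgap o ho ▸ starPt_lt_betaVal hU hc (by omega)
    (by omega)) ?_
  rw [sum_congr rfl fun o ho => hgap o (mem_range.1 ho)]
  simp [sum_range_succ, betaVal]
  ring

theorem params_le_of_lt {nr nc : ℕ} {r d c : ℕ → ℕ} (hnr : 1 ≤ nr) (hnc : 1 ≤ nc)
    (hU : 100 * nr * nc * (1 + (range nr).sup d) ^ 2 * (1 + (range nr).sup r) ^ 2
        * (1 + (range nc).sup c) ^ 2 < U) :
    (∀ t < nr, 2 * r t ≤ U ∧ d t ≤ U) ∧ ∀ t < nc, 2 * c t ≤ U := by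
  set A := (range nr).sup d
  set B := (range nr).sup r
  set C := (range nc).sup c
  have key : ∀ X Y K : ℕ, X ≤ Y → 1 ≤ K →
      100 * K * (1 + Y) ^ 2 = 100 * nr * nc * (1 + A) ^ 2 * (1 + B) ^ 2 * (1 + C) ^ 2 →
      2 * X ≤ U := by
    intro X Y K hXY hK hM
    nlinarith
  have hsq : ∀ Z : ℕ, 1 ≤ (1 + Z) ^ 2 := fun Z => Nat.one_le_pow _ _ (by omega)
  have hnrc : 1 ≤ nr * nc := Nat.one_le_iff_ne_zero.2 (by positivity)
  refine ⟨fun t ht => ⟨?_, ?_⟩, fun t ht => ?_⟩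
  · exact key _ B _ (Finset.le_sup (mem_range.2 ht))
      (one_le_mul (one_le_mul hnrc (hsq A)) (hsq C)) (by ring)
  · have := key _ A _ (Finset.le_sup (f := d) (mem_range.2 ht))
      (one_le_mul (one_le_mul hnrc (hsq B)) (hsq C)) (by ring)
    omega
  · exact key _ C _ (Finset.le_sup (mem_range.2 ht))
      (one_le_mul (one_le_mul hnrc (hsq A)) (hsq B)) (by ring)

end Gadgets

abbrev kingStep (O : Set (ℕ × ℕ)) (a b : ℕ × ℕ) : Prop := a ∈ O ∧ b ∈ O ∧ kingAdj a b

lemma kingAdj_swap {a b : ℕ × ℕ} (h : kingAdj a b) : kingAdj a.swap b.swap := by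
  unfold kingAdj at *
  simp only [Prod.fst_swap, Prod.snd_swap]
  omega

lemma reflTransGen_kingStep_of_line {O : Set (ℕ × ℕ)} (f : ℕ → ℕ × ℕ)
    (hf : ∀ k, kingAdj (f k) (f (k + 1))) {n m : ℕ}
    (hO : ∀ k, min n m ≤ k → k ≤ max n m → f k ∈ O) :
    Relation.ReflTransGen (kingStep O) (f n) (f m) := by
  refine Relation.ReflTransGen.lift f (r := fun k l => kingStep O (f k) (f l)) (fun _ _ h => h) _ _
    (reflTransGen_of_succ _ (fun k hk => ?_) fun k hk => ?_)
  all_goals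
    simp only [Set.mem_Ico, Order.succ_eq_add_one] at hk ⊢
    have hk1 := hO k (by omega) (by omega)
    have hk2 := hO (k + 1) (by omega) (by omega)
  · exact ⟨hk1, hk2, hf k⟩
  · exact ⟨hk2, hk1, by have := hf k; unfold kingAdj at *; omega⟩

lemma Relation.ReflTransGen.kingStep_swap {O : Set (ℕ × ℕ)} {a b : ℕ × ℕ}
    (h : Relation.ReflTransGen (kingStep O) a b) :
    Relation.ReflTransGen (kingStep (Prod.swap ⁻¹' O)) a.swap b.swap :=
  Relation.ReflTransGen.lift Prod.swap
    (fun _ _ h => ⟨by simpa using h.1, by simpa using h.2.1, kingAdj_swap h.2.2⟩) _ _ h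

lemma IsBlock.subset {O B : Set (ℕ × ℕ)} (hB : IsBlock O B) : B ⊆ O := by
  obtain ⟨v, -, rfl⟩ := hB
  exact fun _ hu => hu.1

lemma exists_isBlock_mem {O : Set (ℕ × ℕ)} {w : ℕ × ℕ} (hw : w ∈ O) :
    ∃ B, IsBlock O B ∧ w ∈ B :=
  ⟨_, ⟨w, hw, rfl⟩, hw, Relation.ReflTransGen.refl⟩

lemma IsBlock.preimage_swap {O B : Set (ℕ × ℕ)} (hB : IsBlock O B) :
    IsBlock (Prod.swap ⁻¹' O) (Prod.swap ⁻¹' B) := by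
  obtain ⟨v, hv, rfl⟩ := hB
  refine ⟨v.swap, by simpa using hv,
    Set.ext fun w => and_congr_right fun _ => ⟨fun h => ?_, fun h => ?_⟩⟩
  · simpa only [Prod.swap_swap] using h.kingStep_swap
  · simpa [Set.preimage_preimage] using h.kingStep_swap

lemma VertAdj.horizAdj_preimage_swap {O B₁ B₂ : Set (ℕ × ℕ)} (h : VertAdj O B₁ B₂) :
    HorizAdj (Prod.swap ⁻¹' O) (Prod.swap ⁻¹' B₁) (Prod.swap ⁻¹' B₂) := by
  obtain ⟨y, x₁, x₂, hx₁₂, hends, hgap⟩ := h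
  refine ⟨y, x₁, x₂, hx₁₂, hends, fun x' h₁ h₂ B₃ hB₃ hne₁ hne₂ hB₃x' => ?_⟩
  refine hgap x' h₁ h₂ (Prod.swap ⁻¹' B₃)
    (by simpa [Set.preimage_preimage] using hB₃.preimage_swap)
    (fun he => hne₁ ?_) (fun he => hne₂ ?_) hB₃x'
  all_goals rw [← he, Set.preimage_preimage]; simp

section Blocks

variable {m n : ℕ}

lemma reflTransGen_kingStep_iff {a b : ℕ × ℕ} (ha : a ∈ starIdx m ×ˢ starIdx n)
    (hb : b ∈ starIdx m ×ˢ starIdx n) :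
    Relation.ReflTransGen (kingStep (starIdx m ×ˢ starIdx n)) a b ↔
      runIdx a.1 = runIdx b.1 ∧ runIdx a.2 = runIdx b.2 := by
  constructor
  · intro h
    clear hb
    induction h with
    | refl => exact ⟨rfl, rfl⟩
    | tail _ hstep ih =>
      obtain ⟨hb', hc', h1, h2, h3, h4⟩ := hstep
      rw [ih.1, ih.2, runIdx_eq_of_le_add_one hb'.1 hc'.1 h1 h2,
        runIdx_eq_of_le_add_one hb'.2 hc'.2 h3 h4]
      exact ⟨rfl, rfl⟩
  · rintro ⟨h1, h2⟩
    have hrow : ∀ k, min a.1 b.1 ≤ k → k ≤ max a.1 b.1 → k ∈ starIdx m := fun k hk hk' => by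
      rcases le_total a.1 b.1 with h | h
      · exact (mem_starIdx_of_runIdx_eq ha.1 hb.1 h1 (by omega) (by omega)).1
      · exact (mem_starIdx_of_runIdx_eq hb.1 ha.1 h1.symm (by omega) (by omega)).1
    have hcol : ∀ k, min a.2 b.2 ≤ k → k ≤ max a.2 b.2 → k ∈ starIdx n := fun k hk hk' => by
      rcases le_total a.2 b.2 with h | h
      · exact (mem_starIdx_of_runIdx_eq ha.2 hb.2 h2 (by omega) (by omega)).1
      · exact (mem_starIdx_of_runIdx_eq hb.2 ha.2 h2.symm (by omega) (by omega)).1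
    have hline₁ := reflTransGen_kingStep_of_line (O := starIdx m ×ˢ starIdx n) (n := a.1)
      (m := b.1) (fun k => (k, a.2)) (fun k => by unfold kingAdj; omega)
      fun k hk hk' => ⟨hrow k hk hk', ha.2⟩
    have hline₂ := reflTransGen_kingStep_of_line (O := starIdx m ×ˢ starIdx n) (n := a.2)
      (m := b.2) (fun k => (b.1, k)) (fun k => by unfold kingAdj; omega)
      fun k hk hk' => ⟨hb.1, hcol k hk hk'⟩
    exact hline₁.trans hline₂

lemma IsBlock.mem_iff {B : Set (ℕ × ℕ)} (hB : IsBlock (starIdx m ×ˢ starIdx n) B)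
    {u w : ℕ × ℕ} (hu : u ∈ B) :
    w ∈ B ↔ w ∈ starIdx m ×ˢ starIdx n ∧ runIdx w.1 = runIdx u.1 ∧ runIdx w.2 = runIdx u.2 := by
  obtain ⟨v, hv, rfl⟩ := hB
  obtain ⟨hu, hvu⟩ := hu
  rw [reflTransGen_kingStep_iff hv hu] at hvu
  refine and_congr_right fun hw => ?_
  change Relation.ReflTransGen (kingStep _) v w ↔ _
  rw [reflTransGen_kingStep_iff hv hw, ← hvu.1, ← hvu.2]
  exact ⟨fun h => ⟨h.1.symm, h.2.symm⟩, fun h => ⟨h.1.symm, h.2.symm⟩⟩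

lemma IsBlock.eq_of_mem {B₁ B₂ : Set (ℕ × ℕ)} (hB₁ : IsBlock (starIdx m ×ˢ starIdx n) B₁)
    (hB₂ : IsBlock (starIdx m ×ˢ starIdx n) B₂) {u : ℕ × ℕ} (h₁ : u ∈ B₁) (h₂ : u ∈ B₂) :
    B₁ = B₂ :=
  Set.ext fun _ => (hB₁.mem_iff h₁).trans (hB₂.mem_iff h₂).symm

theorem runIdx_of_horizAdj {B₁ B₂ : Set (ℕ × ℕ)}
    (hB₁ : IsBlock (starIdx m ×ˢ starIdx n) B₁) (hB₂ : IsBlock (starIdx m ×ˢ starIdx n) B₂)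
    (hne : B₁ ≠ B₂) (hadj : HorizAdj (starIdx m ×ˢ starIdx n) B₁ B₂) {i j x y : ℕ}
    (hu : (i, j) ∈ B₁) (hv : (x, y) ∈ B₂) (hjy : j ≤ y) :
    runIdx i = runIdx x ∧ runIdx y = runIdx j + 1 := by
  obtain ⟨x₀, y₁, y₂, hy₁₂, hends, hgap⟩ := hadj
  have hmono := runIdx_mono hy₁₂.le
  have hjy' := runIdx_mono hjy
  have hrow : runIdx i = runIdx x := by
    rcases hends with ⟨h₁, h₂⟩ | ⟨h₂, h₁⟩ <;>
      rw [← ((hB₁.mem_iff hu).1 h₁).2.1, ← ((hB₂.mem_iff hv).1 h₂).2.1]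
  have hcol_ne : runIdx j ≠ runIdx y := fun h =>
    hne <| hB₁.eq_of_mem hB₂ ((hB₁.mem_iff hu).2 ⟨hB₂.subset hv, hrow.symm, h.symm⟩) hv
  rcases hends with ⟨h₁, h₂⟩ | ⟨h₂, h₁⟩
  swap
  · have := ((hB₁.mem_iff hu).1 h₁).2.2
    have := ((hB₂.mem_iff hv).1 h₂).2.2
    dsimp only at *
    omega
  refine ⟨hrow, ?_⟩
  obtain ⟨hO₁, -, hy₁⟩ := (hB₁.mem_iff hu).1 h₁
  obtain ⟨-, -, hy₂⟩ := (hB₂.mem_iff hv).1 h₂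
  dsimp only at hy₁ hy₂
  by_contra hcol
  -- a run of columns strictly between those of `B₁` and `B₂` would meet row `x₀` in a third block
  obtain ⟨hw, hw'⟩ := mem_starIdx_of_runIdx_ge (show y ∈ starIdx n from (hB₂.subset hv).2)
    (t := runIdx j) (by omega)
  obtain ⟨B₃, hB₃, hwB₃⟩ :=
    exists_isBlock_mem (w := (x₀, 20 * runIdx j + 13)) (O := starIdx m ×ˢ starIdx n) ⟨hO₁.1, hw⟩
  refine hgap (20 * runIdx j + 13) ?_ ?_ B₃ hB₃ ?_ ?_ hwB₃
  · unfold runIdx at hy₁ ⊢; omega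
  · unfold runIdx at hy₂ hcol hcol_ne hjy' ⊢; omega
  · rintro rfl
    have := ((hB₃.mem_iff hu).1 hwB₃).2.2
    dsimp only at this
    omega
  · rintro rfl
    have := ((hB₃.mem_iff hv).1 hwB₃).2.2
    dsimp only at this
    omega

theorem runIdx_of_vertAdj {B₁ B₂ : Set (ℕ × ℕ)}
    (hB₁ : IsBlock (starIdx m ×ˢ starIdx n) B₁) (hB₂ : IsBlock (starIdx m ×ˢ starIdx n) B₂)
    (hne : B₁ ≠ B₂) (hadj : VertAdj (starIdx m ×ˢ starIdx n) B₁ B₂) {i j x y : ℕ}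
    (hu : (i, j) ∈ B₁) (hv : (x, y) ∈ B₂) (hix : i ≤ x) :
    runIdx j = runIdx y ∧ runIdx x = runIdx i + 1 := by
  have hB₁' := hB₁.preimage_swap
  have hB₂' := hB₂.preimage_swap
  have hadj' := hadj.horizAdj_preimage_swap
  rw [Set.preimage_swap_prod] at hB₁' hB₂' hadj'
  exact runIdx_of_horizAdj hB₁' hB₂'
    (fun h => hne (Set.preimage_injective.2 Prod.swap_surjective h)) hadj'
    (i := j) (j := i) (x := y) (y := x) hu hv hix

end Blocks

theorem stmt5_general (nr nc : ℕ) (hnr : 1 ≤ nr) (hnc : 1 ≤ nc)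
    (r d : ℕ → ℕ) (c b : ℕ → ℕ) (U : ℕ)
    (hU : 100 * nr * nc * (1 + (Finset.range nr).sup d) ^ 2
        * (1 + (Finset.range nr).sup r) ^ 2
        * (1 + (Finset.range nc).sup c) ^ 2 < U)
    (B₁ B₂ : Set (ℕ × ℕ))
    (hB₁ : IsBlock (orangeSet nr nc U r d c b) B₁)
    (hB₂ : IsBlock (orangeSet nr nc U r d c b) B₂)
    (hne : B₁ ≠ B₂)
    (hadj : HorizAdj (orangeSet nr nc U r d c b) B₁ B₂ ∨
            VertAdj (orangeSet nr nc U r d c b) B₁ B₂)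
    (i j x y : ℕ) (hu : (i, j) ∈ B₁) (hv : (x, y) ∈ B₂)
    (hix : i ≤ x) (hjy : j ≤ y) :
    sInf {t : ℝ | ∃ π : List (ℕ × ℕ), MPath π (i, j) (x, y) ∧
        t = vcost (fun v => |Pcur U r d v.1 - Qcur U c b v.2|) π}
      = 4 * (U : ℝ) ^ 5 + 10 * (U : ℝ) ^ 4 := by
  have hU1 : 1 ≤ U := by omega
  obtain ⟨hrd, hc⟩ := params_le_of_lt hnr hnc hU
  rw [orangeSet_eq_prod hU1 hrd hc] at hB₁ hB₂ hadj
  obtain ⟨hi, hj⟩ : i ∈ starIdx nr ∧ j ∈ starIdx nc := hB₁.subset hu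
  obtain ⟨hx, hy⟩ : x ∈ starIdx nr ∧ y ∈ starIdx nc := hB₂.subset hv
  have hP : ∀ k ∈ starIdx nr, Pcur U r d k = starPt U := fun k hk => alphaVal_eq_starPt hk.2.2
  have hQ : ∀ k ∈ starIdx nc, Qcur U c b k = starPt U := fun k hk => betaVal_eq_starPt hk.2.2
  change sInf (pathCosts _ _ _) = _
  rcases hadj with hadj | hadj
  · obtain ⟨hrow, hcol⟩ := runIdx_of_horizAdj hB₁ hB₂ hne hadj hu hv hjy
    rw [sInf_pathCosts_of_runIdx hP hQ hi hx hj hy hix hrow hcol]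
    exact sum_abs_starPt_sub_Qcur hU1 (hc _ (by linarith [runIdx_le hy]))
  · obtain ⟨hcol, hrow⟩ := runIdx_of_vertAdj hB₁ hB₂ hne hadj hu hv hix
    rw [pathCosts_swap (W' := fun v => |Qcur U c b v.1 - Pcur U r d v.2|)
        (fun v => abs_sub_comm _ _), Prod.swap_prod_mk, Prod.swap_prod_mk,
      sInf_pathCosts_of_runIdx hQ hP hj hy hi hx hjy hcol hrow]
    obtain ⟨hr, hd⟩ := hrd _ (by linarith [runIdx_le hx])
    exact sum_abs_starPt_sub_Pcur hU1 hr hd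

/-- In the DTW lower-bound construction, if `B₁` and `B₂` are
two blocks that are horizontally or vertically adjacent, then for every
`u = (i,j) ∈ B₁` and `v = (x,y) ∈ B₂` with `i ≤ x` and `j ≤ y`, the minimum
cost of an xy-monotone path from `u` to `v` in the induced vertex-weighted grid
equals `4U⁵ + 10U⁴`. -/
theorem stmt5 (nr nc : ℕ) (hnr : 1 ≤ nr) (hnc : 1 ≤ nc)
    (r d : ℕ → ℕ) (c b : ℕ → ℕ) (hb : ∀ j, b j ≤ 1) (U : ℕ)
    (hU : 100 * nr * nc * (1 + (Finset.range nr).sup d) ^ 2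
        * (1 + (Finset.range nr).sup r) ^ 2
        * (1 + (Finset.range nc).sup c) ^ 2 < U)
    (B₁ B₂ : Set (ℕ × ℕ))
    (hB₁ : IsBlock (orangeSet nr nc U r d c b) B₁)
    (hB₂ : IsBlock (orangeSet nr nc U r d c b) B₂)
    (hne : B₁ ≠ B₂)
    (hadj : HorizAdj (orangeSet nr nc U r d c b) B₁ B₂ ∨
            VertAdj (orangeSet nr nc U r d c b) B₁ B₂)
    (i j x y : ℕ) (hu : (i, j) ∈ B₁) (hv : (x, y) ∈ B₂)
    (hix : i ≤ x) (hjy : j ≤ y) :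
    sInf {t : ℝ | ∃ π : List (ℕ × ℕ), MPath π (i, j) (x, y) ∧
        t = vcost (fun v => |Pcur U r d v.1 - Qcur U c b v.2|) π}
      = 4 * (U : ℝ) ^ 5 + 10 * (U : ℝ) ^ 4 :=
  stmt5_general nr nc hnr hnc r d c b U hU B₁ B₂ hB₁ hB₂ hne hadj i j x y hu hv hix hjy
end

section
/- Consider an Intermediary grid with parameters (n, m, (r_i), (c_j), (d_i), (b_j), U), and assume: n ≥ m ≥ 2; U > 1; (m−1)·max_i d_i < √U; and there exists a strictly increasing sequence of integers 0 ≤ s_0 < s_1 < … < s_{m−2} ≤ n−2 with r_{s_i} = c_i for every 0 ≤ i ≤ m−2. Then every minimum-weight directed path from (0,0) to (n−1,m−1) uses no horizontal arcs, exactly n−m vertical arcs, and exactly m−1 diagonal arcs; every diagonal arc (i,j)→(i+1,j+1) used by such a path satisfies r_i = c_j (hence has weight less than √U); and the total weight of such a path is strictly less than (n−m)·U + √U. -/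
/-- Weight of a directed path: the sum of the weights of its arcs. -/
noncomputable def acost (w : ℕ × ℕ → ℕ × ℕ → ℝ) (π : List (ℕ × ℕ)) : ℝ :=
  ((π.zip π.tail).map fun p => w p.1 p.2).sum

/-- Arc weights of the Intermediary grid: horizontal arcs `(i,j)→(i,j+1)` and
vertical arcs `(i,j)→(i+1,j)` have weight `U`; the diagonal arc
`(i,j)→(i+1,j+1)` has weight `d_i·b_j` if `r_i = c_j` and `√U` otherwise. -/
noncomputable def interW (r c d b : ℕ → ℕ) (U : ℕ) (u v : ℕ × ℕ) : ℝ :=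
  if v = (u.1 + 1, u.2 + 1) then
    (if r u.1 = c u.2 then ((d u.1 * b u.2 : ℕ) : ℝ) else Real.sqrt U)
  else (U : ℝ)

/-! A monotone path from `(0,0)` to `(n-1,m-1)` with `H` horizontal, `V` vertical and `D`
diagonal arcs has `V + D = n - 1` and `H + D = m - 1`, so it costs `(n - m + 2H)·U` plus the
weight of its diagonal arcs. The staircase that goes down column `t` and steps diagonally out of
row `s_t` uses only matched diagonals, each of weight at most `max d`, so it costs less than
`(n - m)·U + √U`. An optimal path costs no more; since `√U ≤ 2U` this forces `H = 0`, and then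
its diagonal arcs weigh less than `√U` in total, which excludes an unmatched one (weight `√U`). -/

open Finset

section GridPath

def numHorizArcs (π : List (ℕ × ℕ)) : ℕ :=
  (π.zip π.tail).countP fun p => decide (p.2 = (p.1.1, p.1.2 + 1))

def numVertArcs (π : List (ℕ × ℕ)) : ℕ :=
  (π.zip π.tail).countP fun p => decide (p.2 = (p.1.1 + 1, p.1.2))

def numDiagArcs (π : List (ℕ × ℕ)) : ℕ :=
  (π.zip π.tail).countP fun p => decide (p.2 = (p.1.1 + 1, p.1.2 + 1))

noncomputable def diagCost (w : ℕ × ℕ → ℕ × ℕ → ℝ) (π : List (ℕ × ℕ)) : ℝ :=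
  (((π.zip π.tail).filter fun p => decide (p.2 = (p.1.1 + 1, p.1.2 + 1))).map
    fun p => w p.1 p.2).sum

theorem MPath.endpoint_eq : ∀ {π : List (ℕ × ℕ)} {a t : ℕ × ℕ}, MPath π a t →
    t.1 = a.1 + numVertArcs π + numDiagArcs π ∧ t.2 = a.2 + numHorizArcs π + numDiagArcs π
  | [], _, _, hπ => absurd rfl hπ.1
  | [x], a, t, ⟨_, ha, ht, _⟩ => by
      simp_all [numHorizArcs, numVertArcs, numDiagArcs]
  | (i, j) :: y :: l, a, t, ⟨_, ha, ht, hc⟩ => by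
      obtain ⟨hstep, hc⟩ := List.isChain_cons_cons.1 hc
      obtain ⟨ih₁, ih₂⟩ := MPath.endpoint_eq (π := y :: l) ⟨by simp, rfl, by simpa using ht, hc⟩
      obtain rfl : (i, j) = a := by simpa using ha
      simp only [numHorizArcs, numVertArcs, numDiagArcs, List.tail_cons, List.zip_cons_cons,
        List.countP_cons] at ih₁ ih₂ ⊢
      obtain ⟨i', j'⟩ := y
      dsimp only [MStep] at hstep
      rcases hstep with ⟨rfl, rfl⟩ | ⟨rfl, rfl⟩ | ⟨rfl, rfl⟩ <;> simp <;> omega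

theorem acost_eq_of_isChain (w : ℕ × ℕ → ℕ × ℕ → ℝ) (U : ℝ)
    (hw : ∀ u v, v ≠ (u.1 + 1, u.2 + 1) → w u v = U) :
    ∀ {π : List (ℕ × ℕ)}, π.IsChain MStep →
      acost w π = (numHorizArcs π + numVertArcs π) * U + diagCost w π
  | [], _ => by simp [acost, numHorizArcs, numVertArcs, diagCost]
  | [_], _ => by simp [acost, numHorizArcs, numVertArcs, diagCost]
  | (i, j) :: y :: l, hc => by
      obtain ⟨hstep, hc⟩ := List.isChain_cons_cons.1 hc
      have ih := acost_eq_of_isChain w U hw hc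
      simp only [acost, numHorizArcs, numVertArcs, diagCost, List.tail_cons, List.zip_cons_cons,
        List.countP_cons, List.filter_cons, List.map_cons, List.sum_cons] at ih ⊢
      obtain ⟨i', j'⟩ := y
      dsimp only [MStep] at hstep
      rcases hstep with ⟨rfl, rfl⟩ | ⟨rfl, rfl⟩ | ⟨rfl, rfl⟩ <;>
        simp [ih, hw] <;> ring

theorem diagCost_nonneg {w : ℕ × ℕ → ℕ × ℕ → ℝ} (hw : ∀ u v, 0 ≤ w u v) (π : List (ℕ × ℕ)) :
    0 ≤ diagCost w π :=
  List.sum_nonneg fun x hx => by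
    obtain ⟨p, -, rfl⟩ := List.mem_map.1 hx
    exact hw p.1 p.2

theorem le_diagCost {w : ℕ × ℕ → ℕ × ℕ → ℝ} (hw : ∀ u v, 0 ≤ w u v) {π : List (ℕ × ℕ)}
    {p : (ℕ × ℕ) × (ℕ × ℕ)} (hp : p ∈ π.zip π.tail) (hpd : p.2 = (p.1.1 + 1, p.1.2 + 1)) :
    w p.1 p.2 ≤ diagCost w π :=
  List.single_le_sum (fun x hx => by
      obtain ⟨q, -, rfl⟩ := List.mem_map.1 hx
      exact hw q.1 q.2)
    _ (List.mem_map_of_mem (List.mem_filter.2 ⟨hp, by simpa using hpd⟩))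

theorem MPath.arcs_of_acost_lt {w : ℕ × ℕ → ℕ × ℕ → ℝ} {U θ : ℝ}
    (hw : ∀ u v, v ≠ (u.1 + 1, u.2 + 1) → w u v = U) (hw0 : ∀ u v, 0 ≤ w u v)
    (hU : 0 ≤ U) (hθ : θ ≤ 2 * U) {π : List (ℕ × ℕ)} {N K : ℕ} (hKN : K ≤ N)
    (hπ : MPath π (0, 0) (N, K))
    (hlt : acost w π < (N - K : ℕ) * U + θ) :
    (numHorizArcs π = 0 ∧ numVertArcs π = N - K ∧ numDiagArcs π = K) ∧
      ∀ p ∈ π.zip π.tail, p.2 = (p.1.1 + 1, p.1.2 + 1) → w p.1 p.2 < θ := by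
  obtain ⟨hN, hK⟩ := hπ.endpoint_eq
  dsimp only at hN hK
  rw [acost_eq_of_isChain w U hw hπ.2.2.2] at hlt
  have hH : numHorizArcs π = 0 := by
    by_contra hH
    have hcount : ((N - K : ℕ) : ℝ) + 2 ≤ numHorizArcs π + numVertArcs π := by
      exact_mod_cast (by omega : N - K + 2 ≤ numHorizArcs π + numVertArcs π)
    nlinarith [diagCost_nonneg hw0 π]
  have hV : numVertArcs π = N - K := by omega
  refine ⟨⟨hH, hV, by omega⟩, fun p hp hpd => ?_⟩
  rw [hH, hV, Nat.cast_zero, zero_add] at hlt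
  linarith [le_diagCost hw0 hp hpd]

end GridPath

theorem acost_cons_cons (w : ℕ × ℕ → ℕ × ℕ → ℝ) (a b : ℕ × ℕ) (l : List (ℕ × ℕ)) :
    acost w (a :: b :: l) = w a b + acost w (b :: l) := by
  simp [acost]

theorem acost_map_range (w : ℕ × ℕ → ℕ × ℕ → ℝ) :
    ∀ (g : ℕ → ℕ × ℕ) (n : ℕ),
      acost w ((List.range (n + 1)).map g) = ∑ i ∈ range n, w (g i) (g (i + 1))
  | g, 0 => by simp [acost]
  | g, n + 1 => by
      rw [sum_range_succ', ← acost_map_range w (fun i => g (i + 1)) n,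
        List.range_succ_eq_map (n := n + 1), List.map_cons, List.map_map,
        List.range_succ_eq_map (n := n),
        List.map_cons, List.map_cons, acost_cons_cons, add_comm]
      rfl

section Staircase

variable (s : ℕ → ℕ) (k : ℕ)

def stairCol (i : ℕ) : ℕ := #{t ∈ range k | s t < i}

variable {s k}

theorem stairCol_zero : stairCol s k 0 = 0 := by simp [stairCol]

theorem stairCol_of_forall_lt {N : ℕ} (hN : ∀ t < k, s t < N) : stairCol s k N = k := by
  rw [stairCol, filter_true_of_mem fun t ht => hN t (mem_range.1 ht), card_range]

theorem stairCol_succ_of_notMem {i : ℕ} (hi : i ∉ (range k).image s) :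
    stairCol s k (i + 1) = stairCol s k i := by
  refine congrArg card (filter_congr fun t ht => ?_)
  have : s t ≠ i := fun h => hi (mem_image.2 ⟨t, ht, h⟩)
  omega

theorem StrictMonoOn.filter_range_lt (hs : StrictMonoOn s (Set.Iio k)) {t : ℕ} (ht : t < k) :
    {t' ∈ range k | s t' < s t} = range t := by
  ext t'
  simp only [mem_filter, mem_range]
  constructor
  · rintro ⟨ht', h⟩
    exact (hs.lt_iff_lt ht' ht).1 h
  · intro h
    exact ⟨h.trans ht, (hs.lt_iff_lt (h.trans ht) ht).2 h⟩

theorem StrictMonoOn.filter_range_le (hs : StrictMonoOn s (Set.Iio k)) {t : ℕ} (ht : t < k) :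
    {t' ∈ range k | s t' ≤ s t} = range (t + 1) := by
  ext t'
  simp only [mem_filter, mem_range, Nat.lt_succ_iff]
  constructor
  · rintro ⟨ht', h⟩
    exact (hs.le_iff_le ht' ht).1 h
  · intro h
    have ht' : t' < k := h.trans_lt ht
    exact ⟨ht', (hs.le_iff_le ht' ht).2 h⟩

theorem stairCol_apply (hs : StrictMonoOn s (Set.Iio k)) {t : ℕ} (ht : t < k) :
    stairCol s k (s t) = t := by
  rw [stairCol, hs.filter_range_lt ht, card_range]

theorem stairCol_succ_apply (hs : StrictMonoOn s (Set.Iio k)) {t : ℕ} (ht : t < k) :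
    stairCol s k (s t + 1) = t + 1 := by
  simp only [stairCol, Nat.lt_succ_iff]
  rw [hs.filter_range_le ht, card_range]

theorem stairCol_succ_of_mem (hs : StrictMonoOn s (Set.Iio k)) {i : ℕ}
    (hi : i ∈ (range k).image s) : stairCol s k (i + 1) = stairCol s k i + 1 := by
  obtain ⟨t, ht, rfl⟩ := mem_image.1 hi
  rw [stairCol_succ_apply hs (mem_range.1 ht), stairCol_apply hs (mem_range.1 ht)]

variable (s k) in
-- descends row by row, stepping diagonally exactly out of the rows `s 0, …, s (k - 1)`
def staircase (n : ℕ) : List (ℕ × ℕ) :=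
  (List.range n).map fun i => (i, stairCol s k i)

theorem mPath_staircase (hs : StrictMonoOn s (Set.Iio k)) {n : ℕ} (hn : ∀ t < k, s t < n) :
    MPath (staircase s k (n + 1)) (0, 0) (n, k) := by
  refine ⟨by simp [staircase], by simp [staircase, List.range_succ_eq_map, stairCol_zero], ?_, ?_⟩
  · simp [staircase, List.range_succ, stairCol_of_forall_lt hn]
  · rw [staircase, List.Chain', List.isChain_map, List.isChain_range_succ]
    intro i _
    by_cases hi : i ∈ (range k).image s
    · exact Or.inr (Or.inr ⟨rfl, stairCol_succ_of_mem hs hi⟩)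
    · exact Or.inl ⟨rfl, stairCol_succ_of_notMem hi⟩

theorem acost_staircase (w : ℕ × ℕ → ℕ × ℕ → ℝ) (U : ℝ)
    (hw : ∀ u v, v ≠ (u.1 + 1, u.2 + 1) → w u v = U)
    (hs : StrictMonoOn s (Set.Iio k)) {n : ℕ} (hn : ∀ t < k, s t < n) :
    acost w (staircase s k (n + 1))
      = (n - k : ℕ) * U + ∑ t ∈ range k, w (s t, t) (s t + 1, t + 1) := by
  have hsub : (range k).image s ⊆ range n := by
    simpa [subset_iff] using hn
  have hinj : Set.InjOn s (range k) := by simpa using hs.injOn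
  have hcard : #((range k).image s) = k := by rw [card_image_of_injOn hinj, card_range]
  rw [staircase, acost_map_range, ← sum_sdiff hsub, sum_image hinj]
  congr 1
  · rw [sum_congr rfl fun i hi => hw _ _ ?_, sum_const, nsmul_eq_mul,
      card_sdiff_of_subset hsub, card_range, hcard]
    rw [stairCol_succ_of_notMem (mem_sdiff.1 hi).2]
    simp
  · refine sum_congr rfl fun t ht => ?_
    rw [stairCol_apply hs (mem_range.1 ht), stairCol_succ_apply hs (mem_range.1 ht)]

end Staircase

section Intermediary

variable {r c d b : ℕ → ℕ} {U : ℕ}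

theorem interW_of_ne {u v : ℕ × ℕ} (h : v ≠ (u.1 + 1, u.2 + 1)) :
    interW r c d b U u v = U :=
  if_neg h

theorem interW_nonneg (u v : ℕ × ℕ) : 0 ≤ interW r c d b U u v := by
  unfold interW
  split_ifs <;> positivity

theorem interW_of_diag_of_ne {u v : ℕ × ℕ} (hv : v = (u.1 + 1, u.2 + 1)) (h : r u.1 ≠ c u.2) :
    interW r c d b U u v = √U := by
  rw [interW, if_pos hv, if_neg h]

theorem interW_diag_le (hb : ∀ j, b j ≤ 1) {i j : ℕ} (h : r i = c j) :
    interW r c d b U (i, j) (i + 1, j + 1) ≤ d i := by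
  simp only [interW, if_pos, h, Nat.cast_le]
  exact mul_le_of_le_one_right' (hb j)

theorem acost_interW_staircase_lt (hb : ∀ j, b j ≤ 1) {s : ℕ → ℕ} {k N M : ℕ}
    (hs : StrictMonoOn s (Set.Iio k)) (hsN : ∀ t < k, s t < N) (hid : ∀ t < k, r (s t) = c t)
    (hM : ∀ t < k, d (s t) ≤ M) (hkM : ((k * M : ℕ) : ℝ) < √U) :
    acost (interW r c d b U) (staircase s k (N + 1)) < (N - k : ℕ) * U + √U := by
  rw [acost_staircase _ _ (fun _ _ => interW_of_ne) hs hsN, add_lt_add_iff_left]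
  refine lt_of_le_of_lt ?_ hkM
  calc ∑ t ∈ range k, interW r c d b U (s t, t) (s t + 1, t + 1)
      ≤ ∑ t ∈ range k, (M : ℝ) := sum_le_sum fun t ht =>
        (interW_diag_le hb (hid t (mem_range.1 ht))).trans (by exact_mod_cast hM t (mem_range.1 ht))
    _ = ((k * M : ℕ) : ℝ) := by simp

end Intermediary

theorem stmt8_general (n m : ℕ) (r c d b : ℕ → ℕ) (U : ℕ)
    (hb : ∀ j, b j ≤ 1)
    (hmn : m ≤ n) (hm : 2 ≤ m)
    (hd : (((m - 1) * (Finset.range n).sup d : ℕ) : ℝ) < Real.sqrt U)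
    (s : ℕ → ℕ)
    (hmono : ∀ i j : ℕ, i < j → j ≤ m - 2 → s i < s j)
    (hlast : s (m - 2) ≤ n - 2)
    (hid : ∀ i ≤ m - 2, r (s i) = c i) :
    ∀ π : List (ℕ × ℕ), MPath π (0, 0) (n - 1, m - 1) →
      (∀ π' : List (ℕ × ℕ), MPath π' (0, 0) (n - 1, m - 1) →
        acost (interW r c d b U) π ≤ acost (interW r c d b U) π') →
      ((π.zip π.tail).countP (fun p => decide (p.2 = (p.1.1, p.1.2 + 1))) = 0 ∧
       (π.zip π.tail).countP (fun p => decide (p.2 = (p.1.1 + 1, p.1.2))) = n - m ∧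
       (π.zip π.tail).countP (fun p => decide (p.2 = (p.1.1 + 1, p.1.2 + 1))) = m - 1) ∧
      (∀ p ∈ π.zip π.tail, p.2 = (p.1.1 + 1, p.1.2 + 1) →
        r p.1.1 = c p.1.2 ∧ interW r c d b U p.1 p.2 < Real.sqrt U) ∧
      acost (interW r c d b U) π < ((n - m : ℕ) : ℝ) * (U : ℝ) + Real.sqrt U := by
  intro π hπ hopt
  have hnm : n - 1 - (m - 1) = n - m := by omega
  have hs : StrictMonoOn s (Set.Iio (m - 1)) := fun i _ j hj hij =>
    hmono i j hij (by simp only [Set.mem_Iio] at hj; omega)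
  have hsn : ∀ t < m - 1, s t < n - 1 := fun t ht =>
    (hs.monotoneOn ht (by simp only [Set.mem_Iio]; omega) (by omega : t ≤ m - 2)).trans_lt
      (by omega)
  have hlt : acost (interW r c d b U) π < ((n - m : ℕ) : ℝ) * U + √U := by
    refine (hopt _ (mPath_staircase hs hsn)).trans_lt ?_
    rw [← hnm]
    exact acost_interW_staircase_lt hb hs hsn (fun t ht => hid t (by omega))
      (fun t ht => le_sup (mem_range.2 (by have := hsn t ht; omega))) hd
  have hθ : √(U : ℝ) ≤ 2 * U := by
    have : √(U : ℝ) ≤ U := Real.sqrt_le_self_iff.2 <|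
      (Nat.eq_zero_or_pos U).imp (by exact_mod_cast ·) (by exact_mod_cast ·)
    linarith [(Nat.cast_nonneg U : (0 : ℝ) ≤ U)]
  obtain ⟨hcounts, hdiag⟩ := hπ.arcs_of_acost_lt (fun _ _ => interW_of_ne) interW_nonneg
    (Nat.cast_nonneg U) hθ (by omega) (by rwa [hnm])
  refine ⟨hnm ▸ hcounts, fun p hp hpd => ?_, hlt⟩
  have hw := hdiag p hp hpd
  exact ⟨by_contra fun h => hw.ne (interW_of_diag_of_ne hpd h), hw⟩

/-- In an Intermediary grid with `n ≥ m ≥ 2`, `U > 1`,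
`(m−1)·max_i d_i < √U`, and a strictly increasing sequence
`0 ≤ s_0 < … < s_{m−2} ≤ n−2` with `r_{s_i} = c_i`, every minimum-weight
directed path from `(0,0)` to `(n−1,m−1)` uses no horizontal arcs, exactly
`n−m` vertical arcs and exactly `m−1` diagonal arcs; every diagonal arc
`(i,j)→(i+1,j+1)` it uses satisfies `r_i = c_j` (hence has weight `< √U`); and
its total weight is strictly less than `(n−m)·U + √U`. -/
theorem stmt8 (n m : ℕ) (r c d b : ℕ → ℕ) (U : ℕ)
    (hb : ∀ j, b j ≤ 1)
    (hmn : m ≤ n) (hm : 2 ≤ m) (hU : 1 < U)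
    (hd : (((m - 1) * (Finset.range n).sup d : ℕ) : ℝ) < Real.sqrt U)
    (s : ℕ → ℕ)
    (hmono : ∀ i j : ℕ, i < j → j ≤ m - 2 → s i < s j)
    (hlast : s (m - 2) ≤ n - 2)
    (hid : ∀ i ≤ m - 2, r (s i) = c i) :
    ∀ π : List (ℕ × ℕ), MPath π (0, 0) (n - 1, m - 1) →
      (∀ π' : List (ℕ × ℕ), MPath π' (0, 0) (n - 1, m - 1) →
        acost (interW r c d b U) π ≤ acost (interW r c d b U) π') →
      ((π.zip π.tail).countP (fun p => decide (p.2 = (p.1.1, p.1.2 + 1))) = 0 ∧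
       (π.zip π.tail).countP (fun p => decide (p.2 = (p.1.1 + 1, p.1.2))) = n - m ∧
       (π.zip π.tail).countP (fun p => decide (p.2 = (p.1.1 + 1, p.1.2 + 1))) = m - 1) ∧
      (∀ p ∈ π.zip π.tail, p.2 = (p.1.1 + 1, p.1.2 + 1) →
        r p.1.1 = c p.1.2 ∧ interW r c d b U p.1 p.2 < Real.sqrt U) ∧
      acost (interW r c d b U) π < ((n - m : ℕ) : ℝ) * (U : ℝ) + Real.sqrt U :=
  stmt8_general n m r c d b U hb hmn hm hd s hmono hlast hid
end
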